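/- Define untyped lambda expressions: Expr = Var Name | Lam Name Expr | App Expr Expr, and alpha-equivalence as the least congruence identifying Lam x e with Lam y (rename x to y in e) when y does not occur in e. Define summariseExpr producing a pair (Structure, VarMap) where Structure records the shape with each Lam storing the position tree of occurrences of its bound variable, and VarMap maps each free variable to the position tree of its occurrences. Then for expressions e₁, e₂ (with all binders distinct), e₁ is alpha-equivalent to e₂ if and only if summariseExpr e₁ = summariseExpr e₂. -/
import Mathlib


/-- Untyped lambda expressions with named variables (names are natural numbers). -/
inductive Expr : Type
  | var : ℕ → Expr
  | lam : ℕ → Expr → Expr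
  | app : Expr → Expr → Expr
deriving DecidableEq

/-- Number of nodes of an expression. -/
def Expr.size : Expr → ℕ
  | .var _ => 1
  | .lam _ e => 1 + e.size
  | .app a b => 1 + a.size + b.size

/-- All variable names occurring (free or bound) in an expression. -/
def Expr.allVars : Expr → Finset ℕ
  | .var v => {v}
  | .lam x e => insert x e.allVars
  | .app a b => a.allVars ∪ b.allVars

/-- Rename the free occurrences of `x` to `y`. -/
def Expr.rename (x y : ℕ) : Expr → Expr
  | .var v => if v = x then .var y else .var v
  | .lam v e => if v = x then .lam v e else .lam v (e.rename x y)
  | .app a b => .app (a.rename x y) (b.rename x y)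

/-- Alpha-equivalence: the least congruence identifying `lam x e` with
`lam y (rename x y e)` whenever `y` does not occur in `e`. -/
inductive Aeq : Expr → Expr → Prop
  | refl (e : Expr) : Aeq e e
  | symm {a b : Expr} : Aeq a b → Aeq b a
  | trans {a b c : Expr} : Aeq a b → Aeq b c → Aeq a c
  | lamCong {a b : Expr} (x : ℕ) : Aeq a b → Aeq (.lam x a) (.lam x b)
  | appCong {a₁ b₁ a₂ b₂ : Expr} :
      Aeq a₁ b₁ → Aeq a₂ b₂ → Aeq (.app a₁ a₂) (.app b₁ b₂)
  | alpha (x y : ℕ) (e : Expr) (hy : y ∉ e.allVars) :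
      Aeq (.lam x e) (.lam y (e.rename x y))

/-- The binders of an expression, in order. -/
def Expr.binders : Expr → List ℕ
  | .var _ => []
  | .lam x e => x :: e.binders
  | .app a b => a.binders ++ b.binders

/-- Every binding site binds a distinct variable name. -/
def Expr.UniqueBinders (e : Expr) : Prop := e.binders.Nodup

/-- Position trees: the set of positions of the occurrences of one variable. -/
inductive PosTree : Type
  | here : PosTree
  | leftOnly : PosTree → PosTree
  | rightOnly : PosTree → PosTree
  | both : PosTree → PosTree → PosTree
deriving DecidableEq

/-- The structure (shape) of an expression: variables are anonymous, and each
lambda stores the position tree of the occurrences of its bound variable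
(`none` if the bound variable is unused). -/
inductive Structure : Type
  | svar : Structure
  | slam : Option PosTree → Structure → Structure
  | sapp : Structure → Structure → Structure
deriving DecidableEq

/-- A variable map: a map from names to position trees (modelled as a function
into `Option PosTree`; the domain is the set of names mapped to `some _`). -/
abbrev VarMap : Type := ℕ → Option PosTree

/-- An e-summary: a structure together with a free-variable map. -/
abbrev ESummary : Type := Structure × VarMap

/-- Merge the variable maps of the two children of an application node,
combining position trees with `leftOnly` / `rightOnly` / `both`. -/
def mergeVM (m₁ m₂ : VarMap) : VarMap := fun v =>
  match m₁ v, m₂ v with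
  | some p, some q => some (.both p q)
  | some p, none   => some (.leftOnly p)
  | none,   some q => some (.rightOnly q)
  | none,   none   => none

/-- Compute the e-summary of an expression. -/
def summariseExpr : Expr → ESummary
  | .var v => (.svar, fun u => if u = v then some .here else none)
  | .lam x e =>
      let r := summariseExpr e
      (.slam (r.2 x) r.1, fun u => if u = x then none else r.2 u)
  | .app a b =>
      let r₁ := summariseExpr a
      let r₂ := summariseExpr b
      (.sapp r₁.1 r₂.1, mergeVM r₁.2 r₂.2)


lemma summarise_notMem (e : Expr) (v : ℕ) (h : v ∉ e.allVars) :
    (summariseExpr e).2 v = none := by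
  induction e with
  | var w =>
      simp [Expr.allVars] at h
      simp [summariseExpr, h]
  | lam x e ih =>
      simp [Expr.allVars] at h
      simp [summariseExpr, ih h.2, h.1]
  | app a b iha ihb =>
      simp [Expr.allVars] at h
      simp [summariseExpr, mergeVM, iha h.1, ihb h.2]

lemma summarise_rename (x y : ℕ) (e : Expr) (hy : y ∉ e.allVars) :
    summariseExpr (e.rename x y) = ((summariseExpr e).1,
      fun u => if u = y then (summariseExpr e).2 x
               else if u = x then none else (summariseExpr e).2 u) := by
  induction e with
  | var v =>
      simp [Expr.allVars] at hy
      by_cases hvx : v = x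
      · simp only [Expr.rename, if_pos hvx, summariseExpr]
        refine Prod.ext rfl ?_
        funext u
        dsimp only
        split_ifs <;> first | rfl | omega | (exfalso; omega)
      · simp only [Expr.rename, if_neg hvx, summariseExpr]
        refine Prod.ext rfl ?_
        funext u
        dsimp only
        split_ifs <;> first | rfl | omega | (exfalso; omega)
  | lam v e ih =>
      simp [Expr.allVars] at hy
      obtain ⟨hyv, hye⟩ := hy
      have hnone : (summariseExpr e).2 y = none := summarise_notMem e y hye
      by_cases hvx : v = x
      · simp only [Expr.rename, if_pos hvx, summariseExpr]
        clear ih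
        refine Prod.ext rfl ?_
        funext u
        dsimp only
        split_ifs <;> first | rfl | (exfalso; omega) | simp only [*]
      · simp only [Expr.rename, if_neg hvx, summariseExpr, ih hye]
        clear ih
        refine Prod.ext ?_ ?_
        · have h1 : ¬ v = y := fun h => hyv h.symm
          dsimp only
          first | rfl | rw [if_neg h1, if_neg hvx] | simp [h1, hvx]
        · funext u
          dsimp only
          split_ifs <;> first | rfl | (exfalso; omega) | simp only [*]
  | app a b iha ihb =>
      simp [Expr.allVars] at hy
      simp only [Expr.rename, summariseExpr, iha hy.1, ihb hy.2]
      refine Prod.ext rfl ?_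
      funext u
      simp only [mergeVM]
      try dsimp only
      split_ifs <;> rfl

lemma aeq_summarise {a b : Expr} (h : Aeq a b) :
    summariseExpr a = summariseExpr b := by
  induction h with
  | refl e => rfl
  | symm _ ih => exact ih.symm
  | trans _ _ ih1 ih2 => exact ih1.trans ih2
  | lamCong x _ ih => simp [summariseExpr, ih]
  | appCong _ _ ih1 ih2 => simp [summariseExpr, ih1, ih2]
  | alpha x y e hy =>
      have hnone : (summariseExpr e).2 y = none := summarise_notMem e y hy
      simp only [summariseExpr, summarise_rename x y e hy]
      refine Prod.ext (by simp) ?_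
      funext u
      dsimp only
      split_ifs <;> first | rfl | (exfalso; omega) | simp_all

lemma rename_size (x y : ℕ) (e : Expr) : (e.rename x y).size = e.size := by
  induction e with
  | var v => by_cases h : v = x <;> simp [Expr.rename, h, Expr.size]
  | lam v e ih => by_cases h : v = x <;> simp [Expr.rename, h, Expr.size, ih]
  | app a b iha ihb => simp [Expr.rename, Expr.size, iha, ihb]

lemma summarise_aeq : ∀ n (e₁ e₂ : Expr), e₁.size ≤ n →
    summariseExpr e₁ = summariseExpr e₂ → Aeq e₁ e₂ := by
  intro n
  induction n with
  | zero => intro e₁ e₂ h; cases e₁ <;> simp [Expr.size] at h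
  | succ n ih =>
      intro e₁ e₂ hs h
      cases e₁ with
      | var v =>
          cases e₂ with
          | var w =>
              have := congrArg (fun p => p.2 v) h
              simp [summariseExpr] at this
              rw [this]
              exact Aeq.refl _
          | lam y b => simp [summariseExpr, Prod.ext_iff] at h
          | app a b => simp [summariseExpr, Prod.ext_iff] at h
      | lam x a =>
          cases e₂ with
          | var w => simp [summariseExpr, Prod.ext_iff] at h
          | app c d => simp [summariseExpr, Prod.ext_iff] at h
          | lam y b =>
              simp only [summariseExpr, Prod.ext_iff, Structure.slam.injEq] at h
              obtain ⟨⟨hpt, hst⟩, hm⟩ := h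
              obtain ⟨z, hz⟩ := Infinite.exists_notMem_finset
                (a.allVars ∪ b.allVars ∪ {x, y})
              simp only [Finset.mem_union, Finset.mem_insert,
                Finset.mem_singleton, not_or] at hz
              obtain ⟨⟨hza, hzb⟩, hzx, hzy⟩ := hz
              have hsize : a.size ≤ n := by
                simp [Expr.size] at hs; omega
              have key : summariseExpr (a.rename x z) = summariseExpr (b.rename y z) := by
                rw [summarise_rename x z a hza, summarise_rename y z b hzb]
                refine Prod.ext hst ?_
                funext u
                have hmu := congrFun hm u
                clear hm
                dsimp only at hmu ⊢
                split_ifs at hmu ⊢ <;> first | rfl | (exfalso; omega) | simp_all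
              have hrec : Aeq (a.rename x z) (b.rename y z) :=
                ih _ _ (by rw [rename_size]; exact hsize) key
              have h1 : Aeq (.lam x a) (.lam z (a.rename x z)) :=
                Aeq.alpha x z a hza
              have h2 : Aeq (.lam y b) (.lam z (b.rename y z)) :=
                Aeq.alpha y z b hzb
              exact (h1.trans (Aeq.lamCong z hrec)).trans h2.symm
      | app a b =>
          cases e₂ with
          | var w => simp [summariseExpr, Prod.ext_iff] at h
          | lam y d => simp [summariseExpr, Prod.ext_iff] at h
          | app c d =>
              simp only [summariseExpr, Prod.ext_iff, Structure.sapp.injEq] at h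
              obtain ⟨⟨hs1, hs2⟩, hm⟩ := h
              have hmaps : (summariseExpr a).2 = (summariseExpr c).2 ∧
                  (summariseExpr b).2 = (summariseExpr d).2 := by
                constructor <;> funext u <;>
                · have := congrFun hm u
                  simp only [mergeVM] at this
                  rcases h1 : (summariseExpr a).2 u with _ | p <;>
                    rcases h2 : (summariseExpr b).2 u with _ | q <;>
                    rcases h3 : (summariseExpr c).2 u with _ | r <;>
                    rcases h4 : (summariseExpr d).2 u with _ | s <;>
                    simp_all
              have hsz : a.size ≤ n ∧ b.size ≤ n := by
                simp [Expr.size] at hs; omega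
              exact Aeq.appCong
                (ih a c hsz.1 (Prod.ext hs1 hmaps.1))
                (ih b d hsz.2 (Prod.ext hs2 hmaps.2))

/-- Two expressions with all binders distinct are alpha-equivalent if and only if
their e-summaries coincide. -/
theorem aeq_iff_summariseExpr_eq (e₁ e₂ : Expr)
    (h₁ : e₁.UniqueBinders) (h₂ : e₂.UniqueBinders) :
    Aeq e₁ e₂ ↔ summariseExpr e₁ = summariseExpr e₂ := by
  constructor
  · exact aeq_summarise
  · exact fun h => summarise_aeq e₁.size e₁ e₂ le_rfl h
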